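/- (Corollary 1) Let A_1, …, A_N be real n×n matrices and consider the linear switched system with vector fields f_i(x) = A_i x. Suppose B ⊆ ℝⁿ is a compact absorbing set for the switched system. Then the switched system has no nontrivial periodic solutions: if x is a solution and T > 0 is such that x(t + T) = x(t) for all t ≥ 0, then x(t) = 0 for all t ≥ 0. -/

import Mathlib

/-- A solution of the linear switched system determined by the matrices `A i`:
a function differentiable on `[0,∞)` whose derivative at each `t ≥ 0` is `A i (x t)`
for some index `i` (arbitrary switching). -/
def IsSwitchedSolution {n N : ℕ} (A : Fin N → Matrix (Fin n) (Fin n) ℝ)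
    (x : ℝ → EuclideanSpace ℝ (Fin n)) : Prop :=
  ∀ t : ℝ, 0 ≤ t → ∃ i : Fin N,
    HasDerivWithinAt x (WithLp.toLp 2 ((A i).mulVec (x t))) (Set.Ici 0) t

/-- `M` is positively invariant for the linear switched system. -/
def PositivelyInvariant {n N : ℕ} (A : Fin N → Matrix (Fin n) (Fin n) ℝ)
    (M : Set (EuclideanSpace ℝ (Fin n))) : Prop :=
  ∀ x : ℝ → EuclideanSpace ℝ (Fin n), IsSwitchedSolution A x →
    x 0 ∈ M → ∀ t : ℝ, 0 ≤ t → x t ∈ M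

/-- `M` is an absorbing set for the linear switched system. -/
def AbsorbingSet {n N : ℕ} (A : Fin N → Matrix (Fin n) (Fin n) ℝ)
    (M : Set (EuclideanSpace ℝ (Fin n))) : Prop :=
  PositivelyInvariant A M ∧
    ∀ C : Set (EuclideanSpace ℝ (Fin n)), IsCompact C →
      ∃ tC : ℝ, 0 ≤ tC ∧
        ∀ x : ℝ → EuclideanSpace ℝ (Fin n), IsSwitchedSolution A x →
          x 0 ∈ C → ∀ t : ℝ, tC ≤ t → x t ∈ M

/-!
By linearity every multiple `c • x` of a solution is again a solution. Absorption
of the compact set `{c • x 0}` puts `c • x s` in `B` for all large `s`, and periodicity brings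
every value `x t` back at arbitrarily large times, so the whole line `ℝ • x t` lies in `B`.
A bounded set contains no line through a nonzero vector.
-/

theorem IsSwitchedSolution.const_smul {n N : ℕ} {A : Fin N → Matrix (Fin n) (Fin n) ℝ}
    {x : ℝ → EuclideanSpace ℝ (Fin n)} (hx : IsSwitchedSolution A x) (c : ℝ) :
    IsSwitchedSolution A (fun t => c • x t) := by
  intro t ht
  obtain ⟨i, hi⟩ := hx t ht
  refine ⟨i, ?_⟩
  simp only [WithLp.ofLp_smul, Matrix.mulVec_smul, WithLp.toLp_smul]
  exact hi.const_smul c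

theorem exists_ge_eq_of_periodic_on_Ici {α : Type*} {x : ℝ → α} {T : ℝ} (hT : 0 < T)
    (hper : ∀ t : ℝ, 0 ≤ t → x (t + T) = x t) {t : ℝ} (ht : 0 ≤ t) (τ : ℝ) :
    ∃ s, τ ≤ s ∧ x s = x t := by
  have hiter : ∀ k : ℕ, x (t + k * T) = x t := by
    intro k
    induction k with
    | zero => simp
    | succ k ih =>
      rw [Nat.cast_succ, add_one_mul, ← add_assoc, hper _ (by positivity), ih]
  obtain ⟨k, hk⟩ := exists_nat_ge ((τ - t) / T)
  refine ⟨t + k * T, ?_, hiter k⟩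
  rw [div_le_iff₀ hT] at hk
  linarith

theorem eq_zero_of_isBounded_of_forall_smul_mem {E : Type*} [NormedAddCommGroup E]
    [NormedSpace ℝ E] {S : Set E} (hS : Bornology.IsBounded S) {v : E}
    (hv : ∀ c : ℝ, c • v ∈ S) : v = 0 := by
  obtain ⟨R, hR⟩ := hS.exists_norm_le
  by_contra hne
  have hpos : 0 < ‖v‖ := norm_pos_iff.mpr hne
  have hbound := hR _ (hv ((|R| + 1) / ‖v‖))
  rw [norm_smul, Real.norm_eq_abs, abs_of_pos (by positivity), div_mul_cancel₀ _ hpos.ne'] at hbound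
  linarith [le_abs_self R]

/-- Corollary 1: a linear switched system possessing a compact absorbing set has no
nontrivial periodic solution: any solution that is periodic with some period `T > 0`
is identically zero on `[0,∞)`. -/
theorem no_nontrivial_periodic_solution_of_absorbing {n N : ℕ}
    (A : Fin N → Matrix (Fin n) (Fin n) ℝ)
    (B : Set (EuclideanSpace ℝ (Fin n))) (hB : IsCompact B)
    (habs : AbsorbingSet A B) :
    ∀ x : ℝ → EuclideanSpace ℝ (Fin n), IsSwitchedSolution A x →
      ∀ T : ℝ, 0 < T → (∀ t : ℝ, 0 ≤ t → x (t + T) = x t) →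
        ∀ t : ℝ, 0 ≤ t → x t = 0 := by
  intro x hx T hT hper t ht
  refine eq_zero_of_isBounded_of_forall_smul_mem hB.isBounded fun c => ?_
  obtain ⟨tC, -, hattract⟩ := habs.2 {c • x 0} isCompact_singleton
  obtain ⟨s, hs, hxs⟩ := exists_ge_eq_of_periodic_on_Ici hT hper ht tC
  simpa only [hxs] using hattract _ (hx.const_smul c) rfl s hs
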